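/- arXiv:2204.07518 — 5 statements merged into one kernel-verified Lean document; each statement's English description precedes it below -/
import Mathlib

section
/- Let U be a random variable on a finite set, Y a random variable on a finite set, and Ũ a random variable such that U − Y − Ũ is a Markov chain with p_{Ũ|Y} = p_{U|Y}. Then for any event A ⊆ range(U) and its complement Aᶜ, and any estimator Ê(Y) ∈ {0,1} of the indicator E = 1[U ∈ Aᶜ], we have P[Ê(Y) ≠ E] ≥ P[U ∈ A, Ũ ∈ Aᶜ]. -/
/-!
Split `{U ∈ A, Ũ ∉ A}` according to the value of `Ê(Y)`. Where `Ê(Y) = 1` the estimator errs on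
`{U ∈ A}`, which contains that part. Where `Ê(Y) = 0` the part lies in `{Ũ ∉ A}`, and since
`(Ũ, Y)` has the law of `(U, Y)`, this has the probability of `{U ∉ A}`, where the estimator errs.
-/

open Finset

section FiniteWeights

variable {Ω : Type*} [Fintype Ω] (μ : Ω → ℝ)

theorem sum_filter_comp_eq_of_fiber_sums_eq {α : Type*} [Fintype α] [DecidableEq α] {f g : Ω → α}
    (h : ∀ a, ∑ ω ∈ univ with f ω = a, μ ω = ∑ ω ∈ univ with g ω = a, μ ω)
    (q : α → Prop) [DecidablePred q] :
    ∑ ω ∈ univ with q (f ω), μ ω = ∑ ω ∈ univ with q (g ω), μ ω := by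
  have fiberwise (f : Ω → α) :
      ∑ ω ∈ univ with q (f ω), μ ω = ∑ a ∈ univ with q a, ∑ ω ∈ univ with f ω = a, μ ω := by
    rw [← sum_fiberwise_of_maps_to (g := f) (t := univ.filter q) (by simp)]
    refine sum_congr rfl fun a ha => ?_
    rw [filter_filter]
    refine sum_congr (filter_congr fun ω _ => and_iff_right_of_imp fun hfa => ?_) fun _ _ => rfl
    exact hfa ▸ (mem_filter.1 ha).2
  rw [fiberwise f, fiberwise g]
  exact sum_congr rfl fun a _ => h a

variable {μ}

theorem sum_filter_le_add_of_imp_or (hμ : ∀ ω, 0 ≤ μ ω) {p q r : Ω → Prop}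
    [DecidablePred p] [DecidablePred q] [DecidablePred r] (h : ∀ ω, p ω → q ω ∨ r ω) :
    ∑ ω ∈ univ with p ω, μ ω ≤ ∑ ω ∈ univ with q ω, μ ω + ∑ ω ∈ univ with r ω, μ ω := by
  classical
  calc ∑ ω ∈ univ with p ω, μ ω
      ≤ ∑ ω ∈ univ with (q ω ∨ r ω), μ ω :=
        sum_le_sum_of_subset_of_nonneg (monotone_filter_right _ fun ω _ => h ω) fun ω _ _ => hμ ω
    _ ≤ ∑ ω ∈ univ with q ω, μ ω + ∑ ω ∈ univ with r ω, μ ω := by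
        rw [filter_or, ← sum_union_inter]
        exact le_add_of_nonneg_right (sum_nonneg fun ω _ => hμ ω)

theorem sum_filter_eq_add_of_iff_or {p q r : Ω → Prop}
    [DecidablePred p] [DecidablePred q] [DecidablePred r] (h : ∀ ω, p ω ↔ q ω ∨ r ω)
    (hqr : ∀ ω, q ω → ¬ r ω) :
    ∑ ω ∈ univ with p ω, μ ω = ∑ ω ∈ univ with q ω, μ ω + ∑ ω ∈ univ with r ω, μ ω := by
  classical
  rw [filter_congr fun ω _ => h ω, filter_or, sum_union (disjoint_filter.2 fun ω _ => hqr ω)]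

end FiniteWeights

theorem stmt7_general {Ω 𝒰 𝒴 : Type*} [Fintype Ω] [Fintype 𝒰] [Fintype 𝒴]
    [DecidableEq 𝒰] [DecidableEq 𝒴]
    (μ : Ω → ℝ) (hμ : ∀ ω, 0 ≤ μ ω)
    (U Ut : Ω → 𝒰) (Y : Ω → 𝒴)
    (hsame : ∀ (u : 𝒰) (y : 𝒴),
      (∑ ω ∈ Finset.univ.filter (fun ω => Ut ω = u ∧ Y ω = y), μ ω) =
        ∑ ω ∈ Finset.univ.filter (fun ω => U ω = u ∧ Y ω = y), μ ω)
    (A : Finset 𝒰) (Ehat : 𝒴 → Bool) :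
    (∑ ω ∈ Finset.univ.filter (fun ω => U ω ∈ A ∧ Ut ω ∉ A), μ ω) ≤
      ∑ ω ∈ Finset.univ.filter (fun ω => Ehat (Y ω) ≠ decide (U ω ∉ A)), μ ω := by
  have same_law := sum_filter_comp_eq_of_fiber_sums_eq μ (f := fun ω => (Ut ω, Y ω))
    (g := fun ω => (U ω, Y ω)) (fun a => by simpa only [Prod.ext_iff] using hsame a.1 a.2)
    (fun a => a.1 ∉ A ∧ Ehat a.2 = false)
  calc ∑ ω ∈ univ with U ω ∈ A ∧ Ut ω ∉ A, μ ω
      ≤ ∑ ω ∈ univ with U ω ∈ A ∧ Ehat (Y ω) = true, μ ω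
        + ∑ ω ∈ univ with Ut ω ∉ A ∧ Ehat (Y ω) = false, μ ω :=
        sum_filter_le_add_of_imp_or hμ fun ω h => by cases Ehat (Y ω) <;> simp [h]
    _ = ∑ ω ∈ univ with U ω ∈ A ∧ Ehat (Y ω) = true, μ ω
        + ∑ ω ∈ univ with U ω ∉ A ∧ Ehat (Y ω) = false, μ ω := by rw [same_law]
    _ = ∑ ω ∈ univ with Ehat (Y ω) ≠ decide (U ω ∉ A), μ ω :=
        (sum_filter_eq_add_of_iff_or (fun ω => by cases Ehat (Y ω) <;> simp)
          fun ω h => by simp [h.2]).symm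

/-- If `U − Y − Ũ` is a Markov chain with identical conditionals
(`p_{Ũ|Y} = p_{U|Y}`), then for any event `A` and any estimator `Ê(Y)` of the
indicator `E = 1[U ∈ Aᶜ]`, `P[Ê(Y) ≠ E] ≥ P[U ∈ A, Ũ ∈ Aᶜ]`. -/
theorem stmt7 {Ω 𝒰 𝒴 : Type*} [Fintype Ω] [Fintype 𝒰] [Fintype 𝒴]
    [DecidableEq 𝒰] [DecidableEq 𝒴]
    (μ : Ω → ℝ) (hμ : ∀ ω, 0 ≤ μ ω) (hμ1 : ∑ ω, μ ω = 1)
    (U Ut : Ω → 𝒰) (Y : Ω → 𝒴)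
    (hMarkov : ∀ (y : 𝒴) (u ut : 𝒰),
      (∑ ω ∈ Finset.univ.filter (fun ω => U ω = u ∧ Ut ω = ut ∧ Y ω = y), μ ω) *
        (∑ ω ∈ Finset.univ.filter (fun ω => Y ω = y), μ ω) =
      (∑ ω ∈ Finset.univ.filter (fun ω => U ω = u ∧ Y ω = y), μ ω) *
        (∑ ω ∈ Finset.univ.filter (fun ω => Ut ω = ut ∧ Y ω = y), μ ω))
    (hsame : ∀ (u : 𝒰) (y : 𝒴),
      (∑ ω ∈ Finset.univ.filter (fun ω => Ut ω = u ∧ Y ω = y), μ ω) =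
        ∑ ω ∈ Finset.univ.filter (fun ω => U ω = u ∧ Y ω = y), μ ω)
    (A : Finset 𝒰) (Ehat : 𝒴 → Bool) :
    (∑ ω ∈ Finset.univ.filter (fun ω => U ω ∈ A ∧ Ut ω ∉ A), μ ω) ≤
      ∑ ω ∈ Finset.univ.filter (fun ω => Ehat (Y ω) ≠ decide (U ω ∉ A)), μ ω :=
  stmt7_general μ hμ U Ut Y hsame A Ehat
end

section
/- Reverse hypercontractivity bound for product measures with full support: let p_{VW} be a pmf on a finite set V × W with p_{VW}(v,w) > 0 for all (v,w). Then there exist finite constants α, β ≥ 1 (depending only on p_{VW}) such that for every n and all sets A ⊆ V^n, B ⊆ W^n, P[V^n ∈ A, W^n ∈ B] ≥ P[V^n ∈ A]^α · P[W^n ∈ B]^β, where (V^n, W^n) is i.i.d. with per-symbol law p_{VW}. -/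
attribute [local instance] Classical.propDecidable

/-!
Say that a weight `p` on `V × W` is reverse hypercontractive with exponent `m` when
`(E φ)^m (E ψ)^m ≤ E (φ ψ)^m` for all nonnegative `φ` on `V` and `ψ` on `W`. This property
tensorizes (condition on the first coordinate and use it twice), and for indicators of `A` and `B`
it is the claim with `α = β = m`.

For a single letter with all atoms of mass at least `δ`, normalize `E φ = E ψ = 1` and split
`p = δ (π ⊗ q) + c` with `c ≥ 0`, where `π`, `q` are the marginals. On the product part each factor
gains `E φ^m ≥ 1 + δ m (m - 1)/4 · Var φ`: a gain quadratic in `m`, because the negative part of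
`φ - 1` is controlled by its positive part once no atom is lighter than `δ`. On `c`, Bernoulli's
inequality and `x y ≥ -(x² + y²)/2` lose at most `m/2 · (Var φ + Var ψ)`. Any `m ≥ 1 + 2/δ²`
therefore works.
-/

open Finset

theorem one_add_mul_add_sq_le_pow {t : ℝ} (ht : 0 ≤ t) (m : ℕ) :
    1 + m * t + m * (m - 1) / 2 * t ^ 2 ≤ (1 + t) ^ m := by
  induction m with
  | zero => simp
  | succ k ih =>
    have hk : 0 ≤ (k : ℝ) * (k - 1) := by
      rcases k with _ | k
      · simp
      · push_cast; ring_nf; positivity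
    rw [pow_succ (1 + t)]
    push_cast
    nlinarith [mul_le_mul_of_nonneg_right ih (by linarith : 0 ≤ 1 + t),
      mul_nonneg hk (pow_nonneg ht 3)]

theorem one_add_mul_add_sq_posPart_le_pow {t : ℝ} (ht : -1 ≤ t) (m : ℕ) :
    1 + m * t + m * (m - 1) / 2 * t⁺ ^ 2 ≤ (1 + t) ^ m := by
  rcases le_total 0 t with h | h
  · rw [posPart_of_nonneg h]
    exact one_add_mul_add_sq_le_pow h m
  · rw [posPart_of_nonpos h]
    simpa using one_add_mul_le_pow (by linarith) m

theorem posPart_sq_add_negPart_sq (a : ℝ) : a⁺ ^ 2 + a⁻ ^ 2 = a ^ 2 := by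
  rcases le_total 0 a with h | h
  · simp [posPart_of_nonneg h, negPart_of_nonneg h]
  · simp [posPart_of_nonpos h, negPart_of_nonpos h]

section Weighted

variable {ι : Type*} [Fintype ι] {π : ι → ℝ} {π₀ : ℝ}

theorem mul_sum_negPart_sq_le_sum_posPart_sq {x : ι → ℝ} (hπ₀ : 0 ≤ π₀)
    (hπ : ∀ i, π₀ ≤ π i) (hπ1 : ∑ i, π i = 1) (hx : ∑ i, π i * x i = 0) :
    π₀ * ∑ i, π i * (x i)⁻ ^ 2 ≤ ∑ i, π i * (x i)⁺ ^ 2 := by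
  have hπ_nonneg i : 0 ≤ π i := hπ₀.trans (hπ i)
  set μ := ∑ i, π i * (x i)⁻
  have hμ : ∑ i, π i * (x i)⁺ = μ := by
    rw [← sub_eq_zero, ← hx, ← sum_sub_distrib]
    simp only [← mul_sub, posPart_sub_negPart]
  -- every atom has mass at least `π₀`, so `x⁻ ≤ μ / π₀` everywhere
  have hle i : π₀ * (x i)⁻ ≤ μ :=
    (mul_le_mul_of_nonneg_right (hπ i) (negPart_nonneg _)).trans <|
      single_le_sum (f := fun i => π i * (x i)⁻)
        (fun j _ => mul_nonneg (hπ_nonneg j) (negPart_nonneg _)) (mem_univ i)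
  calc π₀ * ∑ i, π i * (x i)⁻ ^ 2 = ∑ i, π i * (x i)⁻ * (π₀ * (x i)⁻) := by
        rw [mul_sum]; congr! 1 with i; ring
    _ ≤ ∑ i, π i * (x i)⁻ * μ := by
        gcongr with i
        · exact mul_nonneg (hπ_nonneg i) (negPart_nonneg _)
        · exact hle i
    _ = (∑ i, π i * (x i)⁺) ^ 2 := by rw [← sum_mul, hμ, sq]
    _ ≤ (∑ i, π i) * ∑ i, π i * (x i)⁺ ^ 2 :=
        sum_sq_le_sum_mul_sum_of_sq_le_mul _ (fun i _ => hπ_nonneg i)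
          (fun i _ => mul_nonneg (hπ_nonneg i) (sq_nonneg _)) (fun i _ => by ring_nf; rfl)
    _ = ∑ i, π i * (x i)⁺ ^ 2 := by rw [hπ1, one_mul]

theorem one_add_mul_sum_sq_le_sum_pow {φ : ι → ℝ} (hπ₀ : 0 ≤ π₀) (hπ : ∀ i, π₀ ≤ π i)
    (hπ1 : ∑ i, π i = 1) (hφ : ∀ i, 0 ≤ φ i) (hφ1 : ∑ i, π i * φ i = 1) (m : ℕ) :
    1 + π₀ * m * (m - 1) / 4 * ∑ i, π i * (φ i - 1) ^ 2 ≤ ∑ i, π i * φ i ^ m := by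
  have hπ_nonneg i : 0 ≤ π i := hπ₀.trans (hπ i)
  have hx : ∑ i, π i * (φ i - 1) = 0 := by simp [mul_sub, sum_sub_distrib, hφ1, hπ1]
  set P := ∑ i, π i * (φ i - 1)⁺ ^ 2
  set N := ∑ i, π i * (φ i - 1)⁻ ^ 2
  have hNP : π₀ * N ≤ P := mul_sum_negPart_sq_le_sum_posPart_sq hπ₀ hπ hπ1 hx
  have hsq : ∑ i, π i * (φ i - 1) ^ 2 = P + N := by
    simp only [P, N, ← sum_add_distrib, ← mul_add, posPart_sq_add_negPart_sq]
  have hP : 1 + m * (m - 1) / 2 * P ≤ ∑ i, π i * φ i ^ m := by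
    calc 1 + m * (m - 1) / 2 * P
        = ∑ i, π i * (1 + m * (φ i - 1) + m * (m - 1) / 2 * (φ i - 1)⁺ ^ 2) := by
          simp only [mul_add, sum_add_distrib, mul_one, hπ1, mul_left_comm (π _),
            ← mul_sum, hx, P]
          ring
      _ ≤ ∑ i, π i * φ i ^ m := by
          gcongr with i
          · exact hπ_nonneg i
          · simpa using one_add_mul_add_sq_posPart_le_pow (t := φ i - 1) (by linarith [hφ i]) m
  have hπ₀1 : π₀ ≤ 1 := by
    obtain ⟨i, -⟩ := nonempty_of_sum_ne_zero (hπ1 ▸ one_ne_zero : ∑ i, π i ≠ 0)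
    exact (hπ i).trans (hπ1 ▸ single_le_sum (fun j _ => hπ_nonneg j) (mem_univ i))
  have hm : 0 ≤ (m : ℝ) * (m - 1) := by
    rcases m with _ | m
    · simp
    · push_cast; ring_nf; positivity
  have hP0 : 0 ≤ P := sum_nonneg fun i _ => mul_nonneg (hπ_nonneg i) (sq_nonneg _)
  rw [hsq]
  nlinarith [mul_le_mul_of_nonneg_left hNP hm, mul_le_mul_of_nonneg_left
    (mul_le_of_le_one_left hP0 hπ₀1) hm]

end Weighted

section Coupling

variable {V W V' W' : Type*}

def couplingProd (p₁ : V × W → ℝ) (p₂ : V' × W' → ℝ) : (V × V') × (W × W') → ℝ :=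
  fun x => p₁ (x.1.1, x.2.1) * p₂ (x.1.2, x.2.2)

def couplingPow (p : V × W → ℝ) (n : ℕ) : (Fin n → V) × (Fin n → W) → ℝ :=
  fun x => ∏ i, p (x.1 i, x.2 i)

theorem couplingPow_succ (p : V × W → ℝ) (n : ℕ) :
    couplingPow p (n + 1) = fun x => couplingProd p (couplingPow p n)
      ((Fin.consEquiv fun _ => V).symm x.1, (Fin.consEquiv fun _ => W).symm x.2) := by
  funext x
  simp [couplingPow, couplingProd, Fin.prod_univ_succ, Fin.tail]

variable [Fintype V] [Fintype W] [Fintype V'] [Fintype W']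

def ReverseHypercontractive (m : ℕ) (p : V × W → ℝ) : Prop :=
  ∀ φ : V → ℝ, ∀ ψ : W → ℝ, (∀ v, 0 ≤ φ v) → (∀ w, 0 ≤ ψ w) →
    (∑ x, p x * φ x.1) ^ m * (∑ x, p x * ψ x.2) ^ m ≤ ∑ x, p x * (φ x.1 * ψ x.2) ^ m

theorem sum_mul_fst_mul_sum_mul_snd (p : V × W → ℝ) (f : V → ℝ) (g : W → ℝ) :
    (∑ x, p x * f x.1) * ∑ x, p x * g x.2 =
      ∑ x : V × W, (∑ w, p (x.1, w)) * (∑ v, p (v, x.2)) * (f x.1 * g x.2) := by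
  calc (∑ x, p x * f x.1) * ∑ x, p x * g x.2
      = (∑ v, (∑ w, p (v, w)) * f v) * ∑ w, (∑ v, p (v, w)) * g w := by
        rw [Fintype.sum_prod_type, Fintype.sum_prod_type_right]
        simp only [← sum_mul]
    _ = _ := by
        rw [sum_mul_sum, Fintype.sum_prod_type]
        exact sum_congr rfl fun v _ => sum_congr rfl fun w _ => by ring

theorem le_sum_mul_mul_pow_of_mul_marginal_le {p : V × W → ℝ} {δ : ℝ}
    (hp : ∀ v w, δ * ((∑ w', p (v, w')) * ∑ v', p (v', w)) ≤ p (v, w)) (hp1 : ∑ x, p x = 1)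
    (m : ℕ) {φ : V → ℝ} {ψ : W → ℝ} (hφ : ∀ v, 0 ≤ φ v) (hψ : ∀ w, 0 ≤ ψ w)
    (hφ1 : ∑ x, p x * φ x.1 = 1) (hψ1 : ∑ x, p x * ψ x.2 = 1) :
    δ * ((∑ x, p x * φ x.1 ^ m) * ∑ x, p x * ψ x.2 ^ m) + (1 - δ) +
        m * (∑ x, p x * (φ x.1 * ψ x.2) - 1) ≤ ∑ x, p x * (φ x.1 * ψ x.2) ^ m := by
  set r : V × W → ℝ := fun x => (∑ w, p (x.1, w)) * ∑ v, p (v, x.2)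
  have hr (f : V → ℝ) (g : W → ℝ) :
      (∑ x, p x * f x.1) * ∑ x, p x * g x.2 = ∑ x, r x * (f x.1 * g x.2) :=
    sum_mul_fst_mul_sum_mul_snd p f g
  have hr1 : ∑ x, r x = 1 := by simpa [hp1] using (hr 1 1).symm
  have hrφψ : ∑ x, r x * (φ x.1 * ψ x.2) = 1 := by rw [← hr, hφ1, hψ1, one_mul]
  -- `p - δ r` is a nonnegative weight; on it we only use Bernoulli's inequality
  have hbern : ∑ x, (p x - δ * r x) * (1 + m * (φ x.1 * ψ x.2 - 1)) ≤
      ∑ x, (p x - δ * r x) * (φ x.1 * ψ x.2) ^ m := by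
    gcongr with x
    · exact sub_nonneg.2 (hp x.1 x.2)
    · simpa using one_add_mul_le_pow (a := φ x.1 * ψ x.2 - 1)
        (by nlinarith [mul_nonneg (hφ x.1) (hψ x.2)]) m
  have hc1 : ∑ x, (p x - δ * r x) = 1 - δ := by rw [sum_sub_distrib, ← mul_sum, hp1, hr1, mul_one]
  have hct : ∑ x, (p x - δ * r x) * (φ x.1 * ψ x.2) = ∑ x, p x * (φ x.1 * ψ x.2) - δ := by
    simp only [sub_mul, sum_sub_distrib, mul_assoc, ← mul_sum, hrφψ, mul_one]
  have hlin : ∑ x, (p x - δ * r x) * (1 + m * (φ x.1 * ψ x.2 - 1)) =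
      ∑ x, (p x - δ * r x) +
        m * (∑ x, (p x - δ * r x) * (φ x.1 * ψ x.2) - ∑ x, (p x - δ * r x)) := by
    rw [← sum_sub_distrib, mul_sum, ← sum_add_distrib]
    exact sum_congr rfl fun x _ => by ring
  have hsplit : ∑ x, p x * (φ x.1 * ψ x.2) ^ m = δ * ((∑ x, p x * φ x.1 ^ m) * ∑ x, p x * ψ x.2 ^ m)
      + ∑ x, (p x - δ * r x) * (φ x.1 * ψ x.2) ^ m := by
    rw [hr (fun v => φ v ^ m) (fun w => ψ w ^ m), mul_sum, ← sum_add_distrib]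
    exact sum_congr rfl fun x _ => by ring
  rw [hlin, hc1, hct] at hbern
  linarith

theorem mul_marginal_mul_marginal_le {p : V × W → ℝ} {δ : ℝ} (hδ : 0 ≤ δ) (hp : ∀ x, δ ≤ p x)
    (hp1 : ∑ x, p x = 1) (v : V) (w : W) :
    δ * ((∑ w', p (v, w')) * ∑ v', p (v', w)) ≤ p (v, w) := by
  have hp0 x : 0 ≤ p x := hδ.trans (hp x)
  have hπ1 : ∑ w', p (v, w') ≤ 1 := by
    rw [← hp1, Fintype.sum_prod_type]
    exact single_le_sum (f := fun v => ∑ w, p (v, w)) (fun v _ => sum_nonneg fun w _ => hp0 _)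
      (mem_univ v)
  have hq1 : ∑ v', p (v', w) ≤ 1 := by
    rw [← hp1, Fintype.sum_prod_type_right]
    exact single_le_sum (f := fun w => ∑ v, p (v, w)) (fun w _ => sum_nonneg fun v _ => hp0 _)
      (mem_univ w)
  calc δ * ((∑ w', p (v, w')) * ∑ v', p (v', w)) ≤ δ * (1 * 1) := by
        gcongr
        exact sum_nonneg fun w' _ => hp0 _
    _ ≤ p (v, w) := by simpa using hp (v, w)

theorem one_sub_half_sum_sq_le_sum_mul_mul {p : V × W → ℝ} (hp : ∀ x, 0 ≤ p x)
    (hp1 : ∑ x, p x = 1) {φ : V → ℝ} {ψ : W → ℝ} (hφ1 : ∑ x, p x * φ x.1 = 1)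
    (hψ1 : ∑ x, p x * ψ x.2 = 1) :
    1 - (∑ x, p x * (φ x.1 - 1) ^ 2 + ∑ x, p x * (ψ x.2 - 1) ^ 2) / 2 ≤
      ∑ x, p x * (φ x.1 * ψ x.2) := by
  calc 1 - (∑ x, p x * (φ x.1 - 1) ^ 2 + ∑ x, p x * (ψ x.2 - 1) ^ 2) / 2
      = ∑ x, p x * (φ x.1 + ψ x.2 - 1 - ((φ x.1 - 1) ^ 2 + (ψ x.2 - 1) ^ 2) / 2) := by
        simp only [mul_sub, mul_add, mul_div_assoc', sum_sub_distrib, sum_add_distrib, ← sum_div,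
          hφ1, hψ1, mul_one, hp1]
        ring
    _ ≤ ∑ x, p x * (φ x.1 * ψ x.2) := by
        gcongr with x
        · exact hp x
        · nlinarith [sq_nonneg (φ x.1 - 1 + (ψ x.2 - 1))]

theorem one_le_sum_mul_mul_pow_of_le {p : V × W → ℝ} {δ : ℝ} {m : ℕ} (hδ : 0 ≤ δ)
    (hp : ∀ x, δ ≤ p x) (hp1 : ∑ x, p x = 1) (hm : 2 ≤ δ ^ 2 * (m - 1))
    {φ : V → ℝ} {ψ : W → ℝ} (hφ : ∀ v, 0 ≤ φ v) (hψ : ∀ w, 0 ≤ ψ w)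
    (hφ1 : ∑ x, p x * φ x.1 = 1) (hψ1 : ∑ x, p x * ψ x.2 = 1) :
    1 ≤ ∑ x, p x * (φ x.1 * ψ x.2) ^ m := by
  have hp0 x : 0 ≤ p x := hδ.trans (hp x)
  have hdec := le_sum_mul_mul_pow_of_mul_marginal_le (mul_marginal_mul_marginal_le hδ hp hp1)
    hp1 m hφ hψ hφ1 hψ1
  have hcov := one_sub_half_sum_sq_le_sum_mul_mul hp0 hp1 hφ1 hψ1
  have hF := one_add_mul_sum_sq_le_sum_pow (π := p) (φ := fun x => φ x.1) hδ hp hp1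
    (fun x => hφ x.1) hφ1 m
  have hG := one_add_mul_sum_sq_le_sum_pow (π := p) (φ := fun x => ψ x.2) hδ hp hp1
    (fun x => hψ x.2) hψ1 m
  set γ : ℝ := δ * m * (m - 1) / 4
  set F := ∑ x, p x * (φ x.1 - 1) ^ 2
  set G := ∑ x, p x * (ψ x.2 - 1) ^ 2
  have hF0 : 0 ≤ F := sum_nonneg fun x _ => mul_nonneg (hp0 x) (sq_nonneg _)
  have hG0 : 0 ≤ G := sum_nonneg fun x _ => mul_nonneg (hp0 x) (sq_nonneg _)
  have hm1 : 0 ≤ (m : ℝ) - 1 := by nlinarith [sq_nonneg δ]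
  have hγ0 : 0 ≤ γ := by positivity
  -- the choice of `m` makes the quadratic gain `δ γ` beat the linear loss `m / 2`
  have hδγ : m / 2 ≤ δ * γ := by
    have : δ * γ = m / 4 * (δ ^ 2 * (m - 1)) := by ring
    rw [this]
    nlinarith
  have hFG : 1 + γ * (F + G) ≤ (∑ x, p x * φ x.1 ^ m) * ∑ x, p x * ψ x.2 ^ m := by
    have := mul_le_mul hF hG (by positivity) (by linarith [mul_nonneg hγ0 hF0])
    nlinarith [mul_nonneg (mul_nonneg hγ0 hγ0) (mul_nonneg hF0 hG0)]
  nlinarith [mul_le_mul_of_nonneg_left hFG hδ, mul_le_mul_of_nonneg_right hδγ (add_nonneg hF0 hG0)]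

theorem ReverseHypercontractive.of_normalized {p : V × W → ℝ} {m : ℕ} (hp : ∀ x, 0 ≤ p x)
    (hm : m ≠ 0)
    (h : ∀ φ : V → ℝ, ∀ ψ : W → ℝ, (∀ v, 0 ≤ φ v) → (∀ w, 0 ≤ ψ w) →
      ∑ x, p x * φ x.1 = 1 → ∑ x, p x * ψ x.2 = 1 → 1 ≤ ∑ x, p x * (φ x.1 * ψ x.2) ^ m) :
    ReverseHypercontractive m p := by
  intro φ ψ hφ hψ
  have hrhs : 0 ≤ ∑ x, p x * (φ x.1 * ψ x.2) ^ m :=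
    sum_nonneg fun x _ => mul_nonneg (hp x) (pow_nonneg (mul_nonneg (hφ _) (hψ _)) m)
  have ha0 : 0 ≤ ∑ x, p x * φ x.1 := sum_nonneg fun x _ => mul_nonneg (hp x) (hφ x.1)
  have hb0 : 0 ≤ ∑ x, p x * ψ x.2 := sum_nonneg fun x _ => mul_nonneg (hp x) (hψ x.2)
  generalize ha_def : ∑ x, p x * φ x.1 = a at ha0 ⊢
  generalize hb_def : ∑ x, p x * ψ x.2 = b at hb0 ⊢
  obtain rfl | ha := ha0.eq_or_lt
  · rwa [zero_pow hm, zero_mul]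
  obtain rfl | hb := hb0.eq_or_lt
  · rwa [zero_pow hm, mul_zero]
  have key := h (fun v => φ v / a) (fun w => ψ w / b) (fun v => div_nonneg (hφ v) ha.le)
    (fun w => div_nonneg (hψ w) hb.le)
    (by simp only [mul_div_assoc', ← sum_div, ha_def, div_self ha.ne'])
    (by simp only [mul_div_assoc', ← sum_div, hb_def, div_self hb.ne'])
  have hscale : ∑ x, p x * (φ x.1 / a * (ψ x.2 / b)) ^ m =
      (∑ x, p x * (φ x.1 * ψ x.2) ^ m) / (a * b) ^ m := by
    rw [sum_div]
    exact sum_congr rfl fun x _ => by rw [div_mul_div_comm, div_pow, mul_div_assoc']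
  rw [hscale] at key
  rwa [one_le_div (by positivity), mul_pow] at key

theorem reverseHypercontractive_of_le {p : V × W → ℝ} {δ : ℝ} {m : ℕ} (hδ : 0 ≤ δ)
    (hp : ∀ x, δ ≤ p x) (hp1 : ∑ x, p x = 1) (hm : 2 ≤ δ ^ 2 * (m - 1)) :
    ReverseHypercontractive m p :=
  .of_normalized (fun x => hδ.trans (hp x))
    (by rintro rfl; push_cast at hm; nlinarith [sq_nonneg δ])
    fun _ _ hφ hψ hφ1 hψ1 => one_le_sum_mul_mul_pow_of_le hδ hp hp1 hm hφ hψ hφ1 hψ1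

theorem sum_couplingProd_mul (p₁ : V × W → ℝ) (p₂ : V' × W' → ℝ)
    (f : (V × V') × (W × W') → ℝ) :
    ∑ x, couplingProd p₁ p₂ x * f x =
      ∑ z₁, p₁ z₁ * ∑ z₂, p₂ z₂ * f ((z₁.1, z₂.1), (z₁.2, z₂.2)) := by
  rw [← (Equiv.prodProdProdComm V V' W W').symm.sum_comp, Fintype.sum_prod_type]
  simp [couplingProd, mul_sum, mul_assoc]

theorem ReverseHypercontractive.prod {m : ℕ} {p₁ : V × W → ℝ} {p₂ : V' × W' → ℝ}
    (h₁ : ReverseHypercontractive m p₁) (h₂ : ReverseHypercontractive m p₂)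
    (hp₁ : ∀ x, 0 ≤ p₁ x) (hp₂ : ∀ x, 0 ≤ p₂ x) :
    ReverseHypercontractive m (couplingProd p₁ p₂) := by
  intro φ ψ hφ hψ
  set Φ : V → ℝ := fun v => ∑ z, p₂ z * φ (v, z.1)
  set Ψ : W → ℝ := fun w => ∑ z, p₂ z * ψ (w, z.2)
  have hΦ v : 0 ≤ Φ v := sum_nonneg fun z _ => mul_nonneg (hp₂ z) (hφ _)
  have hΨ w : 0 ≤ Ψ w := sum_nonneg fun z _ => mul_nonneg (hp₂ z) (hψ _)
  simp only [sum_couplingProd_mul]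
  calc (∑ z₁, p₁ z₁ * Φ z₁.1) ^ m * (∑ z₁, p₁ z₁ * Ψ z₁.2) ^ m
      ≤ ∑ z₁, p₁ z₁ * (Φ z₁.1 * Ψ z₁.2) ^ m := h₁ Φ Ψ hΦ hΨ
    _ ≤ _ := by
        gcongr with z₁
        · exact hp₁ z₁
        · rw [mul_pow]
          exact h₂ (fun v => φ (z₁.1, v)) (fun w => ψ (z₁.2, w)) (fun _ => hφ _) fun _ => hψ _

theorem ReverseHypercontractive.comp_equiv {m : ℕ} {p : V × W → ℝ}
    (h : ReverseHypercontractive m p) (e₁ : V' ≃ V) (e₂ : W' ≃ W) :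
    ReverseHypercontractive m fun x : V' × W' => p (e₁ x.1, e₂ x.2) := by
  intro φ ψ hφ hψ
  have key (f : V × W → ℝ) :
      ∑ x : V' × W', p (e₁ x.1, e₂ x.2) * f (e₁ x.1, e₂ x.2) = ∑ x, p x * f x :=
    (e₁.prodCongr e₂).sum_comp fun x => p x * f x
  have := h (φ ∘ e₁.symm) (ψ ∘ e₂.symm) (fun _ => hφ _) fun _ => hψ _
  simpa only [← key, Function.comp_apply, Equiv.symm_apply_apply] using this

theorem ReverseHypercontractive.pow {m : ℕ} {p : V × W → ℝ}
    (h : ReverseHypercontractive m p) (hp : ∀ x, 0 ≤ p x) (n : ℕ) :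
    ReverseHypercontractive m (couplingPow p n) := by
  induction n with
  | zero =>
    intro φ ψ _ _
    simp [couplingPow, mul_pow,
      Fintype.sum_subsingleton _ ((Fin.elim0, Fin.elim0) : (Fin 0 → V) × (Fin 0 → W))]
  | succ n ih =>
    rw [couplingPow_succ]
    exact (h.prod ih hp fun x => prod_nonneg fun i _ => hp _).comp_equiv _ _

theorem ReverseHypercontractive.pow_mul_pow_le {m : ℕ} {p : V × W → ℝ}
    (h : ReverseHypercontractive m p) (hm : m ≠ 0) (A : Finset V) (B : Finset W) :
    (∑ x ∈ univ.filter (fun x => x.1 ∈ A), p x) ^ m *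
        (∑ x ∈ univ.filter (fun x => x.2 ∈ B), p x) ^ m ≤
      ∑ x ∈ univ.filter (fun x => x.1 ∈ A ∧ x.2 ∈ B), p x := by
  have := h (fun v => if v ∈ A then 1 else 0) (fun w => if w ∈ B then 1 else 0)
    (fun _ => by split_ifs <;> norm_num) fun _ => by split_ifs <;> norm_num
  have hind (x : V × W) : ((if x.1 ∈ A then 1 else 0) * (if x.2 ∈ B then 1 else 0) : ℝ) ^ m =
      if x.1 ∈ A ∧ x.2 ∈ B then 1 else 0 := by
    split_ifs <;> simp_all
  simp only [hind] at this
  simpa only [sum_filter, mul_ite, mul_one, mul_zero] using this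

theorem sum_filter_prod_eq_sum_filter_couplingPow (p : V × W → ℝ) (n : ℕ)
    (P : (Fin n → V) × (Fin n → W) → Prop) [DecidablePred P] :
    ∑ f ∈ univ.filter (fun f : Fin n → V × W => P ((fun i => (f i).1), fun i => (f i).2)),
        ∏ i, p (f i) = ∑ x ∈ univ.filter P, couplingPow p n x :=
  sum_equiv (Equiv.arrowProdEquivProdArrow _ _ _) (by simp) (by simp [couplingPow])

theorem exists_reverseHypercontractive_couplingPow {p : V × W → ℝ} (hp : ∀ x, 0 < p x)
    (hp1 : ∑ x, p x = 1) :
    ∃ m : ℕ, m ≠ 0 ∧ ∀ n, ReverseHypercontractive m (couplingPow p n) := by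
  obtain ⟨x₀, -, hx₀⟩ := exists_min_image univ p (nonempty_of_sum_ne_zero (hp1 ▸ one_ne_zero))
  have hm : 2 ≤ p x₀ ^ 2 * ((⌈2 / p x₀ ^ 2⌉₊ + 1 : ℕ) - 1 : ℝ) := by
    push_cast
    rw [add_sub_cancel_right, ← div_le_iff₀' (by have := hp x₀; positivity)]
    exact Nat.le_ceil _
  exact ⟨_, Nat.succ_ne_zero _, fun n =>
    (reverseHypercontractive_of_le (hp x₀).le (fun x => hx₀ x (mem_univ x)) hp1 hm).pow
      (fun x => (hp x).le) n⟩

end Coupling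

theorem stmt9_general {V W : Type*} [Fintype V] [Fintype W]
    (p : V × W → ℝ) (hpos : ∀ vw, 0 < p vw) (hsum : ∑ vw, p vw = 1) :
    ∃ α β : ℝ, 1 ≤ α ∧ 1 ≤ β ∧
      ∀ (n : ℕ) (A : Finset (Fin n → V)) (B : Finset (Fin n → W)),
        (∑ f ∈ Finset.univ.filter (fun f : Fin n → V × W =>
            (fun i => (f i).1) ∈ A), ∏ i, p (f i)) ^ α *
          (∑ f ∈ Finset.univ.filter (fun f : Fin n → V × W =>
            (fun i => (f i).2) ∈ B), ∏ i, p (f i)) ^ β ≤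
        ∑ f ∈ Finset.univ.filter (fun f : Fin n → V × W =>
            (fun i => (f i).1) ∈ A ∧ (fun i => (f i).2) ∈ B), ∏ i, p (f i) := by
  obtain ⟨m, hm, hrev⟩ := exists_reverseHypercontractive_couplingPow hpos hsum
  have hm1 : (1 : ℝ) ≤ m := Nat.one_le_cast.2 (Nat.one_le_iff_ne_zero.2 hm)
  refine ⟨m, m, hm1, hm1, fun n A B => ?_⟩
  have key := (hrev n).pow_mul_pow_le hm A B
  simp only [← sum_filter_prod_eq_sum_filter_couplingPow] at key
  simpa only [Real.rpow_natCast] using key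

/-- Reverse hypercontractivity bound for i.i.d. products of a full-support pmf:
there are constants `α, β ≥ 1`, independent of `n`, `A`, `B`, such that
`P[V^n ∈ A, W^n ∈ B] ≥ P[V^n ∈ A]^α · P[W^n ∈ B]^β`. -/
theorem stmt9 {V W : Type*} [Fintype V] [Fintype W] [Nonempty V] [Nonempty W]
    (p : V × W → ℝ) (hpos : ∀ vw, 0 < p vw) (hsum : ∑ vw, p vw = 1) :
    ∃ α β : ℝ, 1 ≤ α ∧ 1 ≤ β ∧
      ∀ (n : ℕ) (A : Finset (Fin n → V)) (B : Finset (Fin n → W)),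
        (∑ f ∈ Finset.univ.filter (fun f : Fin n → V × W =>
            (fun i => (f i).1) ∈ A), ∏ i, p (f i)) ^ α *
          (∑ f ∈ Finset.univ.filter (fun f : Fin n → V × W =>
            (fun i => (f i).2) ∈ B), ∏ i, p (f i)) ^ β ≤
        ∑ f ∈ Finset.univ.filter (fun f : Fin n → V × W =>
            (fun i => (f i).1) ∈ A ∧ (fun i => (f i).2) ∈ B), ∏ i, p (f i) :=
  stmt9_general p hpos hsum
end

section
/- Lower bound via expected Hamming distortion: let X^n be i.i.d. with per-symbol law p_X on a finite alphabet, encoded by any function C : X^n → {0,1}^{⌊nR⌋} with R < H(X), and decoded by any function producing X̂^n. Then there exists δ > 0, depending only on R and p_X, such that for all sufficiently large n, Σ_{i=1}^n P[X̂_i ≠ X_i] ≥ nδ; in particular max_{1≤i≤n} P[X̂_i ≠ X_i] ≥ δ. -/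
attribute [local instance] Classical.propDecidable

/-!
Let `t = ⌊αn⌋`. A sequence that is decoded within Hamming distance `t` lies in one of the
`2^⌊nR⌋` Hamming balls of radius `t` around the reconstructions `D b`, and weighting each point
`y` by `s ^ d(c, y)` shows that such a ball has at most `s⁻ᵗ (1 + (|X| - 1) s)ⁿ` points.
By Chebyshev's inequality for the information content `-log₂ p(Xⁿ)`, all but a vanishing mass
of sequences have probability at most `2^(-n(H - ε))`. So the well-decoded sequences carry mass
at most `o(1) + qⁿ` with `q = 2^R (1 + (|X| - 1) s) s^(-α) 2^(-(H - ε))`, and `q < 1` for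
`ε = (H - R)/2` and small `s`, `α`. Hence with probability at least `1/2` more than `t`
symbols are wrong, and the expected number of errors is at least `αn/2`.
-/

open Finset Real Filter Topology

theorem sum_neg_logb_lt_of_pow_lt_prod {n : ℕ} {q : Fin n → ℝ} {a : ℝ}
    (h : ((2 : ℝ) ^ (-a)) ^ n < ∏ j, q j) : ∑ j, -logb 2 (q j) < n * a := by
  have hpos : 0 < ((2 : ℝ) ^ (-a)) ^ n := by positivity
  have hp0 (j : Fin n) : q j ≠ 0 := fun h0 => by
    rw [prod_eq_zero (mem_univ j) h0] at h
    linarith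
  have := logb_lt_logb one_lt_two hpos h
  rw [logb_pow, logb_rpow two_pos (by norm_num), logb_prod _ _ fun j _ => hp0 j] at this
  simp only [sum_neg_distrib]
  linarith

section IID

variable {X : Type*} [Fintype X] {n : ℕ} {p : X → ℝ}

theorem sum_prod_mul_prod (p : X → ℝ) (h : Fin n → X → ℝ) :
    ∑ xn : Fin n → X, (∏ j, p (xn j)) * ∏ j, h j (xn j) = ∏ j, ∑ x, p x * h j x := by
  simp_rw [← prod_mul_distrib]
  exact (Fintype.prod_sum fun j x => p x * h j x).symm

theorem sum_prod_eq_one (h1 : ∑ x, p x = 1) : ∑ xn : Fin n → X, ∏ j, p (xn j) = 1 := by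
  simpa [h1] using sum_prod_mul_prod (n := n) p (fun _ _ => 1)

theorem sum_prod_mul_prod_finset (h1 : ∑ x, p x = 1) (g : X → ℝ) (s : Finset (Fin n)) :
    ∑ xn : Fin n → X, (∏ j, p (xn j)) * ∏ j ∈ s, g (xn j) = (∑ x, p x * g x) ^ #s := by
  have key := sum_prod_mul_prod p fun j x => if j ∈ s then g x else 1
  simp_rw [mul_ite, mul_one, sum_ite_irrel, h1] at key
  simpa [prod_ite_mem] using key

theorem sum_prod_mul_sum_sq (h1 : ∑ x, p x = 1) {g : X → ℝ} (hg : ∑ x, p x * g x = 0) :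
    ∑ xn : Fin n → X, (∏ j, p (xn j)) * (∑ j, g (xn j)) ^ 2 = n * ∑ x, p x * g x ^ 2 := by
  have pair (j k : Fin n) : ∑ xn : Fin n → X, (∏ l, p (xn l)) * (g (xn j) * g (xn k)) =
      if j = k then ∑ x, p x * g x ^ 2 else 0 := by
    split_ifs with hjk
    · subst hjk
      simpa [← sq] using sum_prod_mul_prod_finset h1 (fun x => g x ^ 2) {j}
    · simpa [prod_pair hjk, hg] using sum_prod_mul_prod_finset h1 g {j, k}
  simp_rw [sq (∑ j, _), sum_mul_sum, mul_sum]
  rw [sum_comm]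
  simp_rw [sum_comm (s := (univ : Finset (Fin n → X))) (t := (univ : Finset (Fin n))), pair]
  simp [mul_sum]

theorem sum_prod_filter_sum_le_sub_le_div (hp : ∀ x, 0 ≤ p x) (h1 : ∑ x, p x = 1) (f : X → ℝ)
    {ε : ℝ} (hn : 0 < n) (hε : 0 < ε) :
    ∑ xn ∈ univ.filter (fun xn : Fin n → X => ∑ j, f (xn j) ≤ n * (∑ x, p x * f x - ε)),
        ∏ j, p (xn j) ≤ (∑ x, p x * (f x - ∑ y, p y * f y) ^ 2) / (n * ε ^ 2) := by
  set μ := ∑ x, p x * f x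
  have hg : ∑ x, p x * (f x - μ) = 0 := by simp [mul_sub, sum_sub_distrib, ← sum_mul, h1, μ]
  have hP (xn : Fin n → X) : 0 ≤ ∏ j, p (xn j) := prod_nonneg fun j _ => hp _
  have hn' : (0 : ℝ) < n := Nat.cast_pos.mpr hn
  have deviation {xn : Fin n → X} (hxn : ∑ j, f (xn j) ≤ n * (μ - ε)) :
      (n * ε) ^ 2 ≤ (∑ j, (f (xn j) - μ)) ^ 2 := by
    rw [sum_sub_distrib, sum_const, card_univ, Fintype.card_fin, nsmul_eq_mul]
    have : 0 ≤ (n : ℝ) * ε := by positivity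
    nlinarith
  rw [le_div_iff₀ (by positivity), ← mul_le_mul_iff_of_pos_left hn']
  set S := univ.filter (fun xn : Fin n → X => ∑ j, f (xn j) ≤ n * (μ - ε))
  calc (n : ℝ) * ((∑ xn ∈ S, ∏ j, p (xn j)) * (n * ε ^ 2))
      = ∑ xn ∈ S, (∏ j, p (xn j)) * (n * ε) ^ 2 := by
        rw [sum_mul, mul_sum]; exact sum_congr rfl fun _ _ => by ring
    _ ≤ ∑ xn ∈ S, (∏ j, p (xn j)) * (∑ j, (f (xn j) - μ)) ^ 2 :=
        sum_le_sum fun xn hxn => mul_le_mul_of_nonneg_left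
          (deviation (mem_filter.mp hxn).2) (hP xn)
    _ ≤ ∑ xn : Fin n → X, (∏ j, p (xn j)) * (∑ j, (f (xn j) - μ)) ^ 2 :=
        sum_le_sum_of_subset_of_nonneg (subset_univ _) fun xn _ _ =>
          mul_nonneg (hP xn) (sq_nonneg _)
    _ = n * ∑ x, p x * (f x - μ) ^ 2 :=
        sum_prod_mul_sum_sq (g := fun x => f x - μ) h1 hg

noncomputable def entropy (p : X → ℝ) : ℝ := -∑ x, p x * logb 2 (p x)

noncomputable def varentropy (p : X → ℝ) : ℝ := ∑ x, p x * (-logb 2 (p x) - entropy p) ^ 2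

theorem sum_prod_filter_pow_lt_prod_le (hp : ∀ x, 0 ≤ p x) (h1 : ∑ x, p x = 1)
    {ε : ℝ} (hn : 0 < n) (hε : 0 < ε) :
    ∑ xn ∈ univ.filter (fun xn : Fin n → X => ((2 : ℝ) ^ (-(entropy p - ε))) ^ n < ∏ j, p (xn j)),
        ∏ j, p (xn j) ≤ varentropy p / (n * ε ^ 2) := by
  have hmean : ∑ x, p x * -logb 2 (p x) = entropy p := by simp [entropy]
  refine le_trans (sum_le_sum_of_subset_of_nonneg ?_ fun xn _ _ => prod_nonneg fun j _ => hp _)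
    (hmean ▸ sum_prod_filter_sum_le_sub_le_div hp h1 (fun x => -logb 2 (p x)) hn hε)
  intro xn hxn
  simp only [mem_filter, mem_univ, true_and] at hxn ⊢
  exact (sum_neg_logb_lt_of_pow_lt_prod hxn).le

end IID

section Hamming

variable {ι X : Type*} [Fintype ι] [DecidableEq ι] [Fintype X]

theorem sum_pow_hammingDist (c : ι → X) (s : ℝ) :
    ∑ y : ι → X, s ^ hammingDist c y = (1 + (Fintype.card X - 1) * s) ^ Fintype.card ι := by
  have hfactor (y : ι → X) : s ^ hammingDist c y = ∏ i, if c i = y i then 1 else s := by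
    rw [prod_ite, prod_const_one, one_mul, prod_const]
    rfl
  have hcoord (i : ι) : ∑ x, (if c i = x then 1 else s) = 1 + (Fintype.card X - 1) * s := by
    have hsplit (x : X) : (if c i = x then 1 else s) = s + if c i = x then 1 - s else 0 := by
      split_ifs <;> ring
    simp only [hsplit, sum_add_distrib, sum_const, sum_ite_eq, mem_univ, if_true, card_univ,
      nsmul_eq_mul]
    ring
  simp_rw [hfactor, ← Fintype.prod_sum (fun i x => if c i = x then 1 else s), hcoord,
    prod_const, card_univ]

theorem card_hammingBall_mul_pow_le (c : ι → X) (t : ℕ) {s : ℝ} (hs0 : 0 < s) (hs1 : s ≤ 1) :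
    #{y | hammingDist c y ≤ t} * s ^ t ≤ (1 + (Fintype.card X - 1) * s) ^ Fintype.card ι := by
  rw [← sum_pow_hammingDist, ← nsmul_eq_mul, ← sum_const]
  exact (sum_le_sum fun y hy => pow_le_pow_of_le_one hs0.le hs1 (mem_filter.mp hy).2).trans
    (sum_le_sum_of_subset_of_nonneg (subset_univ _) fun _ _ _ => by positivity)

theorem card_filter_hammingDist_comp_le_sum {M : Type*} [Fintype M] (C : (ι → X) → M)
    (D : M → ι → X) (t : ℕ) :
    #{y | hammingDist (D (C y)) y ≤ t} ≤ ∑ b, #{y | hammingDist (D b) y ≤ t} := by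
  refine (card_le_card fun y hy => ?_).trans card_biUnion_le
  simp only [mem_biUnion, mem_univ, true_and]
  exact ⟨C y, by simpa using hy⟩

theorem sum_sum_filter_ne_eq_sum_hammingDist (F : (ι → X) → ι → X) (w : (ι → X) → ℝ) :
    ∑ i, ∑ y ∈ univ.filter (fun y => F y i ≠ y i), w y = ∑ y, hammingDist (F y) y * w y := by
  simp_rw [sum_filter]
  rw [sum_comm]
  refine sum_congr rfl fun y _ => ?_
  rw [← sum_filter, sum_const, nsmul_eq_mul]
  rfl

end Hamming

section WeightedSums

variable {β : Type*} [Fintype β] {w : β → ℝ}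

theorem sum_le_sum_filter_lt_add_card_mul (hw : ∀ a, 0 ≤ w a) (s : Finset β) {B : ℝ}
    (hB : 0 ≤ B) : ∑ a ∈ s, w a ≤ ∑ a ∈ univ.filter (fun a => B < w a), w a + #s * B := by
  rw [← sum_filter_add_sum_filter_not s (fun a => B < w a)]
  refine add_le_add (sum_le_sum_of_subset_of_nonneg
    (filter_subset_filter _ (subset_univ s)) fun a _ _ => hw a) ?_
  calc ∑ a ∈ s.filter (fun a => ¬B < w a), w a
      ≤ #(s.filter fun a => ¬B < w a) * B := by
        rw [← nsmul_eq_mul, ← sum_const]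
        exact sum_le_sum fun a ha => not_lt.mp (mem_filter.mp ha).2
    _ ≤ #s * B := by gcongr; exact filter_subset _ _

theorem mul_one_sub_sum_filter_le_sum (hw : ∀ a, 0 ≤ w a) (h1 : ∑ a, w a = 1) (d : β → ℕ)
    (t : ℕ) : (t + 1) * (1 - ∑ a ∈ univ.filter (fun a => d a ≤ t), w a) ≤ ∑ a, d a * w a := by
  have hcompl : 1 - ∑ a ∈ univ.filter (fun a => d a ≤ t), w a =
      ∑ a ∈ univ.filter (fun a => ¬d a ≤ t), w a := by
    rw [← h1, ← sum_filter_add_sum_filter_not univ (fun a => d a ≤ t), add_sub_cancel_left]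
  rw [hcompl, mul_sum]
  refine (sum_le_sum fun a ha => mul_le_mul_of_nonneg_right ?_ (hw a)).trans
    (sum_le_sum_of_subset_of_nonneg (filter_subset _ _) fun a _ _ =>
      mul_nonneg (Nat.cast_nonneg _) (hw a))
  exact_mod_cast Nat.succ_le_of_lt (not_le.mp (mem_filter.mp ha).2)

end WeightedSums

theorem exists_le_of_mul_le_sum {n : ℕ} (hn : 0 < n) {f : Fin n → ℝ} {δ : ℝ}
    (h : n * δ ≤ ∑ i, f i) : ∃ i, δ ≤ f i := by
  have hsum : ∑ _i : Fin n, δ ≤ ∑ i, f i := by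
    rwa [sum_const, card_univ, Fintype.card_fin, nsmul_eq_mul]
  obtain ⟨i, -, hi⟩ := exists_le_of_sum_le (univ_nonempty_iff.mpr ⟨⟨0, hn⟩⟩) hsum
  exact ⟨i, hi⟩

theorem exists_mul_inv_rpow_lt (A : ℝ) {c : ℝ} (hc : 1 < c) :
    ∃ s α : ℝ, 0 < s ∧ s ≤ 1 ∧ 0 < α ∧ (1 + A * s) * s⁻¹ ^ α < c := by
  have hlin : Tendsto (fun s : ℝ => 1 + A * s) (𝓝[>] 0) (𝓝 1) :=
    tendsto_nhdsWithin_of_tendsto_nhds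
      ((continuous_const.add (continuous_const.mul continuous_id)).tendsto' 0 1 (by simp))
  obtain ⟨s, hsc, hs01⟩ := ((hlin.eventually (gt_mem_nhds hc)).and
    (Ioc_mem_nhdsGT one_pos : ∀ᶠ s in 𝓝[>] (0 : ℝ), s ∈ Set.Ioc 0 1)).exists
  have hexp : Tendsto (fun α : ℝ => (1 + A * s) * s⁻¹ ^ α) (𝓝[>] 0) (𝓝 (1 + A * s)) :=
    tendsto_nhdsWithin_of_tendsto_nhds ((continuous_const.mul (continuous_const.rpow
      continuous_id fun _ => Or.inl (inv_pos.mpr hs01.1).ne')).tendsto' 0 _ (by simp))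
  obtain ⟨α, hαc, hα0⟩ := ((hexp.eventually (gt_mem_nhds hsc)).and self_mem_nhdsWithin).exists
  exact ⟨s, α, hs01.1, hs01.2, hα0, hαc⟩

theorem one_add_sub_one_mul_nonneg {A s : ℝ} (hA : 0 ≤ A) (hs0 : 0 ≤ s) (hs1 : s ≤ 1) :
    0 ≤ 1 + (A - 1) * s := by
  nlinarith

theorem exists_rate_exponent_lt_one {A : ℝ} (hA : 0 ≤ A) {R H : ℝ} (hRH : R < H) :
    ∃ s α ε : ℝ, 0 < s ∧ s ≤ 1 ∧ 0 < α ∧ 0 < ε ∧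
      2 ^ R * ((1 + (A - 1) * s) * s⁻¹ ^ α) * (2 : ℝ) ^ (-(H - ε)) ∈ Set.Ico 0 1 := by
  set ε := (H - R) / 2
  have hε : 0 < ε := by simp only [ε]; linarith
  obtain ⟨s, α, hs0, hs1, hα, hsα⟩ := exists_mul_inv_rpow_lt (A - 1) (one_lt_rpow one_lt_two hε)
  have hbase := one_add_sub_one_mul_nonneg hA hs0.le hs1
  refine ⟨s, α, ε, hs0, hs1, hα, hε, by positivity, ?_⟩
  have hexp : (2 : ℝ) ^ R * 2 ^ (-(H - ε)) * 2 ^ ε = 1 := by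
    rw [← rpow_add two_pos, ← rpow_add two_pos,
      show R + -(H - ε) + ε = 0 by simp only [ε]; ring, rpow_zero]
  calc 2 ^ R * ((1 + (A - 1) * s) * s⁻¹ ^ α) * (2 : ℝ) ^ (-(H - ε))
      = 2 ^ R * 2 ^ (-(H - ε)) * ((1 + (A - 1) * s) * s⁻¹ ^ α) := by ring
    _ < 2 ^ R * 2 ^ (-(H - ε)) * 2 ^ ε := by gcongr
    _ = 1 := hexp

theorem pow_natFloor_mul_le {a : ℝ} (ha : 1 ≤ a) {x : ℝ} (hx : 0 ≤ x) (n : ℕ) :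
    a ^ ⌊(n : ℝ) * x⌋₊ ≤ (a ^ x) ^ n := by
  rw [← rpow_natCast, ← rpow_natCast, ← rpow_mul (by linarith), mul_comm x]
  exact rpow_le_rpow_of_exponent_le ha (Nat.floor_le (by positivity))

section Code

variable {X : Type*} [Fintype X] {n : ℕ} {p : X → ℝ}

theorem sum_prod_filter_hammingDist_le (hp : ∀ x, 0 ≤ p x) (h1 : ∑ x, p x = 1)
    {M : Type*} [Fintype M] (C : (Fin n → X) → M) (D : M → Fin n → X) (t : ℕ) {s ε : ℝ}
    (hs0 : 0 < s) (hs1 : s ≤ 1) (hn : 0 < n) (hε : 0 < ε) :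
    ∑ xn ∈ univ.filter (fun xn => hammingDist (D (C xn)) xn ≤ t), ∏ j, p (xn j) ≤
      varentropy p / (n * ε ^ 2) + Fintype.card M *
        ((1 + (Fintype.card X - 1) * s) ^ n * s⁻¹ ^ t) * ((2 : ℝ) ^ (-(entropy p - ε))) ^ n := by
  have hcard : (#(univ.filter fun xn => hammingDist (D (C xn)) xn ≤ t) : ℝ) ≤
      Fintype.card M * ((1 + (Fintype.card X - 1) * s) ^ n * s⁻¹ ^ t) := by
    calc (#(univ.filter fun xn => hammingDist (D (C xn)) xn ≤ t) : ℝ)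
        ≤ ∑ m, (#{y | hammingDist (D m) y ≤ t} : ℝ) := by
          exact_mod_cast card_filter_hammingDist_comp_le_sum C D t
      _ ≤ ∑ _m : M, (1 + (Fintype.card X - 1) * s) ^ n * s⁻¹ ^ t := sum_le_sum fun m _ => by
          have := card_hammingBall_mul_pow_le (D m) t hs0 hs1
          rw [Fintype.card_fin] at this
          rwa [inv_pow, ← div_eq_mul_inv, le_div_iff₀ (by positivity)]
      _ = _ := by simp
  refine (sum_le_sum_filter_lt_add_card_mul (fun xn => prod_nonneg fun j _ => hp _) _
    (by positivity)).trans (add_le_add (sum_prod_filter_pow_lt_prod_le hp h1 hn hε) ?_)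
  exact mul_le_mul_of_nonneg_right hcard (by positivity)

theorem sum_prod_filter_hammingDist_floor_le (hp : ∀ x, 0 ≤ p x) (h1 : ∑ x, p x = 1)
    {R : ℝ} (hR0 : 0 ≤ R) (C : (Fin n → X) → Fin ⌊(n : ℝ) * R⌋₊ → Bool)
    (D : (Fin ⌊(n : ℝ) * R⌋₊ → Bool) → Fin n → X) {s α ε : ℝ} (hs0 : 0 < s) (hs1 : s ≤ 1)
    (hα : 0 ≤ α) (hn : 0 < n) (hε : 0 < ε) :
    ∑ xn ∈ univ.filter (fun xn => hammingDist (D (C xn)) xn ≤ ⌊(n : ℝ) * α⌋₊), ∏ j, p (xn j) ≤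
      varentropy p / (n * ε ^ 2) + (2 ^ R * ((1 + (Fintype.card X - 1) * s) * s⁻¹ ^ α) *
        (2 : ℝ) ^ (-(entropy p - ε))) ^ n := by
  refine (sum_prod_filter_hammingDist_le hp h1 C D _ hs0 hs1 hn hε).trans
    (add_le_add le_rfl ?_)
  have hbase := one_add_sub_one_mul_nonneg (Fintype.card X).cast_nonneg hs0.le hs1
  have hcode : (Fintype.card (Fin ⌊(n : ℝ) * R⌋₊ → Bool) : ℝ) ≤ (2 ^ R) ^ n := by
    simpa using pow_natFloor_mul_le one_le_two hR0 n
  rw [mul_pow, mul_pow, mul_pow]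
  gcongr
  exact pow_natFloor_mul_le (one_le_inv₀ hs0 |>.mpr hs1) hα n

theorem mul_le_sum_sum_filter_ne (hp : ∀ x, 0 ≤ p x) (h1 : ∑ x, p x = 1)
    (F : (Fin n → X) → Fin n → X) {α : ℝ}
    (hF : ∑ xn ∈ univ.filter (fun xn => hammingDist (F xn) xn ≤ ⌊(n : ℝ) * α⌋₊),
      ∏ j, p (xn j) ≤ 1 / 2) :
    n * (α / 2) ≤ ∑ i, ∑ xn ∈ univ.filter (fun xn : Fin n → X => F xn i ≠ xn i), ∏ j, p (xn j) := by
  rw [sum_sum_filter_ne_eq_sum_hammingDist]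
  calc (n : ℝ) * (α / 2) ≤ (⌊(n : ℝ) * α⌋₊ + 1) * (1 - 1 / 2) := by
        nlinarith [Nat.lt_floor_add_one ((n : ℝ) * α)]
    _ ≤ (⌊(n : ℝ) * α⌋₊ + 1) * (1 - ∑ xn ∈ univ.filter
          (fun xn => hammingDist (F xn) xn ≤ ⌊(n : ℝ) * α⌋₊), ∏ j, p (xn j)) := by
        gcongr
    _ ≤ _ := mul_one_sub_sum_filter_le_sum (fun xn => prod_nonneg fun j _ => hp _)
          (sum_prod_eq_one h1) _ _

end Code

theorem stmt13_general {X : Type*} [Fintype X]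
    (pX : X → ℝ) (hp : ∀ x, 0 ≤ pX x) (h1 : ∑ x, pX x = 1)
    (R : ℝ) (hR0 : 0 ≤ R) (hR : R < -∑ x, pX x * Real.logb 2 (pX x)) :
    ∃ δ : ℝ, 0 < δ ∧ ∃ N : ℕ, ∀ n ≥ N,
      ∀ (C : (Fin n → X) → Fin (⌊(n : ℝ) * R⌋₊) → Bool)
        (D : (Fin (⌊(n : ℝ) * R⌋₊) → Bool) → Fin n → X),
        ((n : ℝ) * δ ≤ ∑ i : Fin n,
          ∑ xn ∈ Finset.univ.filter (fun xn : Fin n → X => D (C xn) i ≠ xn i),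
            ∏ j, pX (xn j)) ∧
        ∃ i : Fin n, δ ≤
          ∑ xn ∈ Finset.univ.filter (fun xn : Fin n → X => D (C xn) i ≠ xn i),
            ∏ j, pX (xn j) := by
  obtain ⟨s, α, ε, hs0, hs1, hα, hε, hq0, hq1⟩ :=
    exists_rate_exponent_lt_one (Fintype.card X).cast_nonneg (show R < entropy pX from hR)
  set q := 2 ^ R * ((1 + (Fintype.card X - 1) * s) * s⁻¹ ^ α) * (2 : ℝ) ^ (-(entropy pX - ε))
  have hsmall : ∀ᶠ n : ℕ in atTop,
      0 < n ∧ varentropy pX / (n * ε ^ 2) < 1 / 4 ∧ q ^ n < 1 / 4 :=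
    (eventually_gt_atTop 0).and <|
      ((tendsto_const_nhds.div_atTop (tendsto_natCast_atTop_atTop.atTop_mul_const
        (pow_pos hε 2))).eventually_lt_const (by norm_num)).and
      ((tendsto_pow_atTop_nhds_zero_of_lt_one hq0 hq1).eventually_lt_const (by norm_num))
  obtain ⟨N, hN⟩ := eventually_atTop.mp hsmall
  refine ⟨α / 2, by positivity, N, fun n hn C D => ?_⟩
  obtain ⟨hn0, hvar, hqn⟩ := hN n hn
  have hdist := mul_le_sum_sum_filter_ne hp h1 (fun xn => D (C xn)) (α := α) (by
    linarith [sum_prod_filter_hammingDist_floor_le hp h1 hR0 C D hs0 hs1 hα.le hn0 hε])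
  exact ⟨hdist, exists_le_of_mul_le_sum hn0 hdist⟩

/-- Converse to the lossy source coding theorem (expected Hamming distortion):
any rate-`R` code with `R < H(X)` has, for all large `n`, total per-symbol error
probability at least `nδ`, hence some symbol with error probability `≥ δ`. -/
theorem stmt13 {X : Type*} [Fintype X] [Nonempty X]
    (pX : X → ℝ) (hp : ∀ x, 0 ≤ pX x) (h1 : ∑ x, pX x = 1)
    (R : ℝ) (hR0 : 0 ≤ R) (hR : R < -∑ x, pX x * Real.logb 2 (pX x)) :
    ∃ δ : ℝ, 0 < δ ∧ ∃ N : ℕ, ∀ n ≥ N,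
      ∀ (C : (Fin n → X) → Fin (⌊(n : ℝ) * R⌋₊) → Bool)
        (D : (Fin (⌊(n : ℝ) * R⌋₊) → Bool) → Fin n → X),
        ((n : ℝ) * δ ≤ ∑ i : Fin n,
          ∑ xn ∈ Finset.univ.filter (fun xn : Fin n → X => D (C xn) i ≠ xn i),
            ∏ j, pX (xn j)) ∧
        ∃ i : Fin n, δ ≤
          ∑ xn ∈ Finset.univ.filter (fun xn : Fin n → X => D (C xn) i ≠ xn i),
            ∏ j, pX (xn j) :=
  stmt13_general pX hp h1 R hR0 hR
end

section
/- Main converse (full-support, single-letter form of the key step): let p_{XY} be X-confusable, X^n, Y^n i.i.d. ∼ p_{XY}, C any encoding of X^n, i ∈ [n], I_i a set of codeword positions, c a realization of C_{I_i}(X^n), and x̄ any element of X. Then for any estimator X̂_i(C_{I_i}, Y^n): P[X̂_i(C_{I_i},Y^n) ≠ X_i, C_{I_i}(X^n) = c] ≥ P[X_i = x̄, X̃_i ≠ x̄, C_{I_i}(X^n) = C_{I_i}(X̃^n) = c], where X̃^n is drawn conditionally i.i.d. from p_{X|Y}(·|Y_j) given Y^n (i.e., X^n − Y^n − X̃^n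 is a Markov chain with identical conditionals). -/
/-!
Condition on `Y^n = y`. Given `y`, the estimator is constant on the event `C_I(X^n) = c`, so its
error mass there dominates either the mass `A` of `{X_i = x̄, C_I = c}` or the mass `B` of
`{X_i ≠ x̄, C_I = c}`. Since `X^n` and `X̃^n` are conditionally independent with the same law, the
event on the left has conditional mass `A * B / S`, where `S ≥ A, B` is the total mass, and
`A * B / S ≤ min A B`.
-/

attribute [local instance] Classical.propDecidable

open Finset

section CondIndepCopy

variable {α β : Type*} [Fintype α] [Fintype β]

lemma sum_filter_le_sum_filter_of_imp (w : α → ℝ) (hw : ∀ x, 0 ≤ w x) {P Q : α → Prop}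
    (hPQ : ∀ x, P x → Q x) : ∑ x ∈ univ.filter P, w x ≤ ∑ x ∈ univ.filter Q, w x :=
  sum_le_sum_of_subset_of_nonneg (monotone_filter_right _ fun x _ => hPQ x) fun x _ _ => hw x

lemma sum_filter_mul_sum_filter_div_le (w : α → ℝ) (hw : ∀ x, 0 ≤ w x) {P Q R : α → Prop}
    (h : (∀ x, P x → R x) ∨ (∀ x, Q x → R x)) :
    (∑ x ∈ univ.filter P, w x) * (∑ x ∈ univ.filter Q, w x) / ∑ x, w x ≤
      ∑ x ∈ univ.filter R, w x := by
  have hS : 0 ≤ ∑ x, w x := sum_nonneg fun x _ => hw x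
  have hle_S : ∀ S : α → Prop, ∑ x ∈ univ.filter S, w x ≤ ∑ x, w x :=
    fun _ => sum_le_univ_sum_of_nonneg hw
  have hnonneg : ∀ S : α → Prop, 0 ≤ ∑ x ∈ univ.filter S, w x :=
    fun _ => sum_nonneg fun x _ => hw x
  rcases h with hPR | hQR
  · calc _ = (∑ x ∈ univ.filter P, w x) * ((∑ x ∈ univ.filter Q, w x) / ∑ x, w x) :=
          mul_div_assoc ..
      _ ≤ (∑ x ∈ univ.filter P, w x) * 1 :=
          mul_le_mul_of_nonneg_left (div_le_one_of_le₀ (hle_S Q) hS) (hnonneg P)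
      _ ≤ _ := (mul_one _).trans_le (sum_filter_le_sum_filter_of_imp w hw hPR)
  · calc _ = (∑ x ∈ univ.filter P, w x) / (∑ x, w x) * ∑ x ∈ univ.filter Q, w x :=
          mul_div_right_comm ..
      _ ≤ 1 * ∑ x ∈ univ.filter Q, w x :=
          mul_le_mul_of_nonneg_right (div_le_one_of_le₀ (hle_S P) hS) (hnonneg Q)
      _ ≤ _ := (one_mul _).trans_le (sum_filter_le_sum_filter_of_imp w hw hQR)

lemma sum_filter_condIndepCopy_eq (w : α → β → ℝ) (P Q : α → Prop) :
    ∑ t ∈ univ.filter (fun t : α × β × α => P t.1 ∧ Q t.2.2),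
        w t.1 t.2.1 * (w t.2.2 t.2.1 / ∑ x, w x t.2.1) =
      ∑ y, (∑ x ∈ univ.filter P, w x y) * (∑ x ∈ univ.filter Q, w x y) / ∑ x, w x y := by
  rw [sum_filter]
  simp only [Fintype.sum_prod_type]
  rw [sum_comm]
  refine sum_congr rfl fun y _ => ?_
  rw [sum_filter, sum_filter, sum_mul_sum, sum_div]
  refine sum_congr rfl fun x _ => ?_
  rw [sum_div]
  refine sum_congr rfl fun x' _ => ?_
  rw [ite_zero_mul_ite_zero, ite_div, zero_div, mul_div_assoc]

theorem sum_filter_condIndepCopy_le (w : α → β → ℝ) (hw : ∀ x y, 0 ≤ w x y) (P Q : α → Prop)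
    (R : α → β → Prop) (hR : ∀ y, (∀ x, P x → R x y) ∨ (∀ x, Q x → R x y)) :
    ∑ t ∈ univ.filter (fun t : α × β × α => P t.1 ∧ Q t.2.2),
        w t.1 t.2.1 * (w t.2.2 t.2.1 / ∑ x, w x t.2.1) ≤
      ∑ t ∈ univ.filter (fun t : α × β => R t.1 t.2), w t.1 t.2 := by
  rw [sum_filter_condIndepCopy_eq, sum_filter]
  simp only [Fintype.sum_prod_type]
  rw [sum_comm]
  refine sum_le_sum fun y _ => ?_
  rw [← sum_filter]
  exact sum_filter_mul_sum_filter_div_le (w · y) (hw · y) (hR y)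

end CondIndepCopy

theorem stmt15_general {X Y : Type*} [Fintype X] [Fintype Y] (n k : ℕ)
    (p : X → Y → ℝ) (hp : ∀ x y, 0 ≤ p x y)
    (C : (Fin n → X) → Fin k → Bool) (I : Finset (Fin k)) (c : Fin k → Bool)
    (i : Fin n) (xb : X)
    (Est : (Fin k → Bool) → (Fin n → Y) → X)
    (hloc : ∀ (b b' : Fin k → Bool) (yn : Fin n → Y),
      (∀ j ∈ I, b j = b' j) → Est b yn = Est b' yn) :
    (∑ t ∈ Finset.univ.filter
        (fun t : (Fin n → X) × (Fin n → Y) × (Fin n → X) =>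
          t.1 i = xb ∧ t.2.2 i ≠ xb ∧
            (∀ j ∈ I, C t.1 j = c j) ∧ ∀ j ∈ I, C t.2.2 j = c j),
        (∏ j, p (t.1 j) (t.2.1 j)) *
          ∏ j, p (t.2.2 j) (t.2.1 j) / ∑ x, p x (t.2.1 j)) ≤
      ∑ t ∈ Finset.univ.filter
        (fun t : (Fin n → X) × (Fin n → Y) =>
          Est (C t.1) t.2 ≠ t.1 i ∧ ∀ j ∈ I, C t.1 j = c j),
        ∏ j, p (t.1 j) (t.2 j) := by
  have hcase : ∀ y, (∀ x, (x i = xb ∧ ∀ j ∈ I, C x j = c j) →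
        Est (C x) y ≠ x i ∧ ∀ j ∈ I, C x j = c j) ∨
      (∀ x, (x i ≠ xb ∧ ∀ j ∈ I, C x j = c j) →
        Est (C x) y ≠ x i ∧ ∀ j ∈ I, C x j = c j) := by
    intro y
    by_cases hE : Est c y = xb
    · refine Or.inr fun x ⟨hxi, hxc⟩ => ⟨?_, hxc⟩
      rw [hloc _ _ y hxc, hE]
      exact hxi.symm
    · refine Or.inl fun x ⟨hxi, hxc⟩ => ⟨?_, hxc⟩
      rwa [hloc _ _ y hxc, hxi]
  convert sum_filter_condIndepCopy_le (fun x y => ∏ j, p (x j) (y j))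
    (fun x y => prod_nonneg fun j _ => hp _ _) _ _ _ hcase using 2 with t
  · ext t
    simp only [mem_filter, mem_univ, true_and]
    tauto
  · rw [prod_div_distrib, Fintype.prod_sum fun j x => p x (t.2.1 j)]
  · congr

/-- Key step of the main converse: for an `X`-confusable source, any estimator of
`X_i` from the probed codeword bits `C_{I}` (restricted to pattern `c`) and the
full side information `Y^n` satisfies
`P[X̂_i ≠ X_i, C_I(X^n) = c] ≥ P[X_i = x̄, X̃_i ≠ x̄, C_I(X^n) = C_I(X̃^n) = c]`,
where `X^n − Y^n − X̃^n` is a Markov chain with identical conditionals. -/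
theorem stmt15 {X Y : Type*} [Fintype X] [Fintype Y] (n k : ℕ)
    (p : X → Y → ℝ) (hp : ∀ x y, 0 ≤ p x y) (hsum : ∑ x, ∑ y, p x y = 1)
    (hY : ∀ y, 0 < ∑ x, p x y)
    (hconf : ∀ x1 x2 : X, ∃ y : Y, 0 < p x1 y ∧ 0 < p x2 y)
    (C : (Fin n → X) → Fin k → Bool) (I : Finset (Fin k)) (c : Fin k → Bool)
    (i : Fin n) (xb : X)
    (Est : (Fin k → Bool) → (Fin n → Y) → X)
    (hloc : ∀ (b b' : Fin k → Bool) (yn : Fin n → Y),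
      (∀ j ∈ I, b j = b' j) → Est b yn = Est b' yn) :
    (∑ t ∈ Finset.univ.filter
        (fun t : (Fin n → X) × (Fin n → Y) × (Fin n → X) =>
          t.1 i = xb ∧ t.2.2 i ≠ xb ∧
            (∀ j ∈ I, C t.1 j = c j) ∧ ∀ j ∈ I, C t.2.2 j = c j),
        (∏ j, p (t.1 j) (t.2.1 j)) *
          ∏ j, p (t.2.2 j) (t.2.1 j) / ∑ x, p x (t.2.1 j)) ≤
      ∑ t ∈ Finset.univ.filter
        (fun t : (Fin n → X) × (Fin n → Y) =>
          Est (C t.1) t.2 ≠ t.1 i ∧ ∀ j ∈ I, C t.1 j = c j),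
        ∏ j, p (t.1 j) (t.2 j) :=
  stmt15_general n k p hp C I c i xb Est hloc
end

section
/- Geometric rate-sum bound for the hierarchical scheme: with parameters ε_ℓ = ε_0/2^ℓ, b_ℓ = 16^ℓ b_0, n_ℓ = 4^{ℓ(ℓ+1)} b_0^{ℓ+1} (so n_ℓ = b_ℓ · n_{ℓ−1}, n_0 = b_0), and k_ℓ = ε_ℓ n_ℓ (β + c + (b_ℓ/n_ℓ)·log(e·2^ℓ/ε_0)) for ℓ ≥ 1 and k_0 = ⌈(R+ε_0) b_0⌉, the total number of bits probed up to level L satisfies Σ_{ℓ=0}^{L} (n_L/n_ℓ)·k_ℓ ≤ n_L (R + γ·ε_0) for a constant γ depending only on β, c, and b_0 (not on L or n), provided ε_0 b_0 is large enough. -/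
open Finset Real

/-
The level-0 block costs at most `n_L (R + ε₀ + 1/b₀) ≤ n_L (R + 2ε₀)` once `ε₀ b₀ ≥ 1`.
At level `ℓ ≥ 1` the `n_ℓ` cancels and the term becomes `n_L ε₀ 2^{-ℓ} (β + c + (b_ℓ/n_ℓ) log₂(e 2^ℓ/ε₀))`;
since `b_ℓ ≤ n_ℓ` and `1/ε₀ ≤ b₀`, the bracket is at most `A + ℓ` with `A = β + c + log₂(e b₀)`.
Finally `∑_{ℓ ≥ 1} (A + ℓ) 2^{-ℓ} = A + 2`, so `γ = A + 4` works for every `L`.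
-/

lemma sixteen_pow_mul_le_four_pow_mul_pow {b : ℝ} (hb : 1 ≤ b) (ℓ : ℕ) :
    (16 : ℝ) ^ ℓ * b ≤ 4 ^ (ℓ * (ℓ + 1)) * b ^ (ℓ + 1) := by
  have h16 : (16 : ℝ) ^ ℓ = 4 ^ (2 * ℓ) := by rw [pow_mul]; norm_num
  rw [h16]
  exact mul_le_mul (pow_le_pow_right₀ (by norm_num) (by rcases ℓ with _ | ℓ <;> nlinarith))
    (le_self_pow₀ hb (Nat.succ_ne_zero ℓ)) (by positivity) (by positivity)

lemma logb_exp_mul_two_pow_div_le {ε b : ℝ} (hε : 0 < ε) (hεb : 1 ≤ ε * b) (ℓ : ℕ) :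
    logb 2 (exp 1 * 2 ^ ℓ / ε) ≤ logb 2 (exp 1 * b) + ℓ := by
  have hb : 0 < b := pos_of_mul_pos_right (one_pos.trans_le hεb) hε.le
  have harg : exp 1 * 2 ^ ℓ / ε ≤ exp 1 * b * 2 ^ ℓ := by
    rw [div_le_iff₀ hε]
    have : 0 < exp 1 * 2 ^ ℓ := by positivity
    nlinarith
  calc logb 2 (exp 1 * 2 ^ ℓ / ε)
      ≤ logb 2 (exp 1 * b * 2 ^ ℓ) := logb_le_logb_of_le one_lt_two (by positivity) harg
    _ = logb 2 (exp 1 * b) + ℓ := by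
      rw [logb_mul (by positivity) (by positivity), logb_pow, logb_self_eq_one one_lt_two,
        mul_one]

lemma logb_exp_mul_two_pow_div_nonneg {ε : ℝ} (hε : 0 < ε) (hε1 : ε ≤ 1) (ℓ : ℕ) :
    0 ≤ logb 2 (exp 1 * 2 ^ ℓ / ε) := by
  refine logb_nonneg one_lt_two ?_
  rw [le_div_iff₀ hε, one_mul]
  calc ε ≤ 1 * 1 := by rw [one_mul]; exact hε1
    _ ≤ exp 1 * 2 ^ ℓ := by
      gcongr
      · exact one_le_exp zero_le_one
      · exact one_le_pow₀ one_le_two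

lemma div_mul_ceil_le {N b ε R : ℝ} (hN : 0 ≤ N) (hb : 0 < b) (hεb : 1 ≤ ε * b) :
    N / b * (⌈(R + ε) * b⌉ : ℝ) ≤ N * (R + 2 * ε) := by
  calc N / b * (⌈(R + ε) * b⌉ : ℝ)
      ≤ N / b * ((R + ε) * b + ε * b) := by
        gcongr
        exact (Int.ceil_lt_add_one _).le.trans (by linarith)
    _ = N * (R + 2 * ε) := by field_simp; ring

lemma div_mul_level_bits_le {N n B b ε β c : ℝ} (hN : 0 ≤ N) (hn : 0 < n) (hBn : B ≤ n) (hε : 0 < ε) (hε1 : ε ≤ 1) (hεb : 1 ≤ ε * b) (ℓ : ℕ) :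
    N / n * (ε / 2 ^ ℓ * n * (β + c + B / n * logb 2 (exp 1 * 2 ^ ℓ / ε))) ≤
      N * ε * ((β + c + logb 2 (exp 1 * b) + ℓ) / 2 ^ ℓ) := by
  have hfrac : B / n ≤ 1 := (div_le_one hn).2 hBn
  have hlog := logb_exp_mul_two_pow_div_nonneg hε hε1 ℓ
  have hbracket : β + c + B / n * logb 2 (exp 1 * 2 ^ ℓ / ε) ≤
      β + c + logb 2 (exp 1 * b) + ℓ := by
    linarith [(mul_le_of_le_one_left hlog hfrac).trans (logb_exp_mul_two_pow_div_le hε hεb ℓ)]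
  calc N / n * (ε / 2 ^ ℓ * n * (β + c + B / n * logb 2 (exp 1 * 2 ^ ℓ / ε)))
      = N * ε * ((β + c + B / n * logb 2 (exp 1 * 2 ^ ℓ / ε)) / 2 ^ ℓ) := by
        field_simp
    _ ≤ N * ε * ((β + c + logb 2 (exp 1 * b) + ℓ) / 2 ^ ℓ) := by
        gcongr

lemma sum_range_add_succ_div_two_pow (a : ℝ) (L : ℕ) :
    ∑ i ∈ range L, (a + (i + 1 : ℕ)) / 2 ^ (i + 1) = a + 2 - (a + L + 2) / 2 ^ L := by
  induction L with
  | zero => norm_num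
  | succ L ih =>
    rw [sum_range_succ, ih]
    field_simp
    push_cast
    ring

lemma sum_range_add_succ_div_two_pow_le {a : ℝ} (ha : 0 ≤ a) (L : ℕ) :
    ∑ i ∈ range L, (a + (i + 1 : ℕ)) / 2 ^ (i + 1) ≤ a + 2 := by
  rw [sum_range_add_succ_div_two_pow]
  have : 0 ≤ (a + L + 2) / 2 ^ L := by positivity
  linarith

theorem stmt19_general (β c R : ℝ) (hβ : 0 < β) (hc : 0 < c)
    (b0 : ℕ) (hb0 : 2 ≤ b0) :
    ∃ γ M : ℝ, 0 < γ ∧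
      ∀ ε0 : ℝ, 0 < ε0 → ε0 < 1 → M ≤ ε0 * b0 →
      ∀ L : ℕ,
        ∑ ℓ ∈ Finset.range (L + 1),
          (((4 : ℝ) ^ (L * (L + 1)) * (b0 : ℝ) ^ (L + 1)) /
              ((4 : ℝ) ^ (ℓ * (ℓ + 1)) * (b0 : ℝ) ^ (ℓ + 1))) *
            (if ℓ = 0 then ((⌈(R + ε0) * (b0 : ℝ)⌉ : ℤ) : ℝ)
             else (ε0 / 2 ^ ℓ) * ((4 : ℝ) ^ (ℓ * (ℓ + 1)) * (b0 : ℝ) ^ (ℓ + 1)) *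
               (β + c + (((16 : ℝ) ^ ℓ * (b0 : ℝ)) /
                   ((4 : ℝ) ^ (ℓ * (ℓ + 1)) * (b0 : ℝ) ^ (ℓ + 1))) *
                 Real.logb 2 (Real.exp 1 * 2 ^ ℓ / ε0))) ≤
          ((4 : ℝ) ^ (L * (L + 1)) * (b0 : ℝ) ^ (L + 1)) * (R + γ * ε0) := by
  have hb : (1 : ℝ) ≤ b0 := by exact_mod_cast one_le_two.trans hb0
  set A := β + c + logb 2 (exp 1 * b0)
  have hA : 0 ≤ A := by
    have : 0 ≤ logb 2 (exp 1 * b0) :=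
      logb_nonneg one_lt_two (one_le_mul_of_one_le_of_one_le (one_le_exp zero_le_one) hb)
    positivity
  refine ⟨A + 4, 1, by positivity, fun ε0 hε0 hε1 hεb L => ?_⟩
  set N : ℝ := 4 ^ (L * (L + 1)) * (b0 : ℝ) ^ (L + 1)
  have hN : 0 ≤ N := by positivity
  rw [sum_range_succ', if_pos rfl]
  have hhead : N / (4 ^ (0 * (0 + 1)) * (b0 : ℝ) ^ (0 + 1)) * (⌈(R + ε0) * b0⌉ : ℝ) ≤
      N * (R + 2 * ε0) := by
    simpa using div_mul_ceil_le hN (by positivity) hεb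
  calc _ ≤ ∑ i ∈ range L, N * ε0 * ((A + (i + 1 : ℕ)) / 2 ^ (i + 1)) + N * (R + 2 * ε0) := by
        refine add_le_add (sum_le_sum fun i _ => ?_) hhead
        rw [if_neg (Nat.succ_ne_zero i)]
        exact div_mul_level_bits_le hN (by positivity)
          (sixteen_pow_mul_le_four_pow_mul_pow hb _) hε0 hε1.le hεb _
    _ ≤ N * ε0 * (A + 2) + N * (R + 2 * ε0) := by
        rw [← mul_sum]
        gcongr
        exact sum_range_add_succ_div_two_pow_le hA L
    _ = N * (R + (A + 4) * ε0) := by ring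

/-- Geometric rate-sum bound for the hierarchical scheme: with
`ε_ℓ = ε0/2^ℓ`, `b_ℓ = 16^ℓ b0`, `n_ℓ = 4^{ℓ(ℓ+1)} b0^{ℓ+1}`,
`k_0 = ⌈(R+ε0)b0⌉` and
`k_ℓ = ε_ℓ n_ℓ (β + c + (b_ℓ/n_ℓ)·log₂(e·2^ℓ/ε0))` for `ℓ ≥ 1`,
there are constants `γ > 0` and `M` depending only on `β`, `c`, `b0` such that
whenever `ε0·b0 ≥ M`, for every number of levels `L`,
`∑_{ℓ=0}^{L} (n_L/n_ℓ)·k_ℓ ≤ n_L·(R + γ·ε0)`. -/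
theorem stmt19 (β c R : ℝ) (hβ : 0 < β) (hc : 0 < c) (hR : 0 < R)
    (b0 : ℕ) (hb0 : 2 ≤ b0) :
    ∃ γ M : ℝ, 0 < γ ∧
      ∀ ε0 : ℝ, 0 < ε0 → ε0 < 1 → M ≤ ε0 * b0 →
      ∀ L : ℕ,
        ∑ ℓ ∈ Finset.range (L + 1),
          (((4 : ℝ) ^ (L * (L + 1)) * (b0 : ℝ) ^ (L + 1)) /
              ((4 : ℝ) ^ (ℓ * (ℓ + 1)) * (b0 : ℝ) ^ (ℓ + 1))) *
            (if ℓ = 0 then ((⌈(R + ε0) * (b0 : ℝ)⌉ : ℤ) : ℝ)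
             else (ε0 / 2 ^ ℓ) * ((4 : ℝ) ^ (ℓ * (ℓ + 1)) * (b0 : ℝ) ^ (ℓ + 1)) *
               (β + c + (((16 : ℝ) ^ ℓ * (b0 : ℝ)) /
                   ((4 : ℝ) ^ (ℓ * (ℓ + 1)) * (b0 : ℝ) ^ (ℓ + 1))) *
                 Real.logb 2 (Real.exp 1 * 2 ^ ℓ / ε0))) ≤
          ((4 : ℝ) ^ (L * (L + 1)) * (b0 : ℝ) ^ (L + 1)) * (R + γ * ε0) :=
  stmt19_general β c R hβ hc b0 hb0
end
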